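/- Let γ = ((i₁ j₁),…,(i_k j_k)) ∈ Σ_n(k) and let l ∈ {1,…,k}. Then every element of C_{γ_{l−1}}(j_l) is strictly greater than i_l, and i_l is the largest element of C_{γ_{l−1}}(i_l) with this property: every x ∈ C_{γ_{l−1}}(i_l) satisfying x < y for all y ∈ C_{γ_{l−1}}(j_l) satisfies x ≤ i_l. -/

import Mathlib

/-- ℓ(σ): the number of cycles (orbits) of σ, including fixed points, counted via the
minimal representative of each orbit. -/
noncomputable def cycleCount {n : ℕ} (σ : Equiv.Perm (Fin n)) : ℕ :=
  Set.ncard {x : Fin n | ∀ y, σ.SameCycle x y → x ≤ y}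

/-- |σ| := n − ℓ(σ). -/
noncomputable def normPerm {n : ℕ} (σ : Equiv.Perm (Fin n)) : ℕ := n - cycleCount σ

/-- σ₁ ≼ σ₂ iff |σ₂| = |σ₁| + |σ₁⁻¹σ₂|. -/
def precLe {n : ℕ} (σ₁ σ₂ : Equiv.Perm (Fin n)) : Prop :=
  normPerm σ₂ = normPerm σ₁ + normPerm (σ₁⁻¹ * σ₂)

/-- Σ_n(k): tuples of k transpositions with |τ₁⋯τ_k| = k and τ₁⋯τ_k ≼ (1 … n). -/
def SigmaSet (n k : ℕ) : Set (Fin k → Equiv.Perm (Fin n)) :=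
  {τ | (∀ l, (τ l).IsSwap) ∧ normPerm (List.ofFn τ).prod = k ∧
      precLe (List.ofFn τ).prod (finRotate n)}

/-- γ_m := τ₁∘⋯∘τ_m, the product of the first m entries of the chain. -/
def gammaP {n k : ℕ} (τ : Fin k → Equiv.Perm (Fin n)) (m : ℕ) : Equiv.Perm (Fin n) :=
  ((List.ofFn τ).take m).prod

/-!
If `ρ ≼ c`, every cycle of `ρ` follows the cyclic order of `ℤ/n`: `ρ x` is the first element of
the cycle of `x` met when walking forward from `x` (`CyclicallyOrdered`). This property passes from
`ρ * (u v)` to `ρ` when `u`, `v` lie in different cycles of `ρ`, and along a minimal factorisation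
of `c` into transpositions every step is of this kind.

For `γ ∈ Σ_n(k)` one has `|γ_l| = l`, so `i_l` and `j_l` lie in different cycles of `γ_{l-1}`, and
`γ_l = γ_{l-1} (i_l j_l) ≼ c` is cyclically ordered. Its merged cycle runs from `i_l` through the
old cycle of `j_l` up to `j_l`, then through the old cycle of `i_l` back to `i_l`; cyclic order
confines the former to the arc `(i_l, j_l]` and the latter to the arc `(j_l, i_l]`.
-/

open Equiv Equiv.Perm

namespace Equiv.Perm

theorem SameCycle.mem_of_mapsTo {α : Type*} [Finite α] {f : Perm α} {s : Set α} {x y : α}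
    (hs : Set.MapsTo f s s) (h : f.SameCycle x y) (hx : x ∈ s) : y ∈ s := by
  obtain ⟨m, -, -, rfl⟩ := h.exists_pow_eq''
  rw [coe_pow]
  exact hs.iterate m hx

section MulSwap

variable {α : Type*} [DecidableEq α] {σ : Perm α} {u v x y : α}

theorem mul_swap_apply_left : (σ * swap u v) u = σ v := by
  rw [mul_apply, swap_apply_left]

theorem mul_swap_apply_right : (σ * swap u v) v = σ u := by
  rw [mul_apply, swap_apply_right]

theorem mul_swap_apply_of_ne_of_ne (hu : x ≠ u) (hv : x ≠ v) : (σ * swap u v) x = σ x := by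
  rw [mul_apply, swap_apply_of_ne_of_ne hu hv]

variable [Finite α]

theorem SameCycle.of_mul_swap (h : (σ * swap u v).SameCycle u y) :
    σ.SameCycle u y ∨ σ.SameCycle v y := by
  refine h.mem_of_mapsTo (s := {z | σ.SameCycle u z ∨ σ.SameCycle v z}) (fun z hz => ?_)
    (Or.inl .rfl)
  simp only [Set.mem_ofPred_eq, mul_apply, sameCycle_apply_right] at hz ⊢
  rcases eq_or_ne z u with rfl | hu
  · exact Or.inr (by rw [swap_apply_left])
  rcases eq_or_ne z v with rfl | hv
  · exact Or.inl (by rw [swap_apply_right])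
  · rwa [swap_apply_of_ne_of_ne hu hv]

theorem sameCycle_mul_swap (h : ¬σ.SameCycle u v) : (σ * swap u v).SameCycle u v := by
  have hmaps : Set.MapsTo σ {z | (σ * swap u v).SameCycle u z ∨ σ.SameCycle u z}
      {z | (σ * swap u v).SameCycle u z ∨ σ.SameCycle u z} := by
    rintro z (hz | hz)
    · rcases eq_or_ne z v with rfl | hv
      · exact Or.inl (by rw [← mul_swap_apply_left]; exact sameCycle_apply_right.2 .rfl)
      rcases eq_or_ne z u with rfl | hu
      · exact Or.inr (sameCycle_apply_right.2 .rfl)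
      · exact Or.inl (by rwa [← mul_swap_apply_of_ne_of_ne hu hv, sameCycle_apply_right])
    · exact Or.inr (sameCycle_apply_right.2 hz)
  have hσv : σ.SameCycle (σ v) v := sameCycle_apply_left.2 .rfl
  have hπu : (σ * swap u v).SameCycle u (σ v) := by
    rw [← mul_swap_apply_left]; exact sameCycle_apply_right.2 .rfl
  rcases hσv.mem_of_mapsTo hmaps (Or.inl hπu) with hv | hv
  · exact hv
  · exact absurd hv h

theorem sameCycle_mul_swap_of_sameCycle (h : ¬σ.SameCycle u v) (hxy : σ.SameCycle x y) :
    (σ * swap u v).SameCycle x y := by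
  set π := σ * swap u v
  have huv : π.SameCycle u v := sameCycle_mul_swap h
  have hstep : ∀ z, π.SameCycle z (σ z) ∨ π.SameCycle u (σ z) := by
    intro z
    rcases eq_or_ne z u with rfl | hu
    · exact Or.inr (by rw [← mul_swap_apply_right]; exact sameCycle_apply_right.2 huv)
    rcases eq_or_ne z v with rfl | hv
    · exact Or.inr (by rw [← mul_swap_apply_left]; exact sameCycle_apply_right.2 .rfl)
    · exact Or.inl (by rw [← mul_swap_apply_of_ne_of_ne hu hv]; exact sameCycle_apply_right.2 .rfl)
  have hmaps : ∀ w, Set.MapsTo σ {z | π.SameCycle w z ∨ π.SameCycle u z}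
      {z | π.SameCycle w z ∨ π.SameCycle u z} := by
    rintro w z (hz | hz) <;> rcases hstep z with hσz | hσz
    exacts [Or.inl (hz.trans hσz), Or.inr hσz, Or.inr (hz.trans hσz), Or.inr hσz]
  rcases hxy.mem_of_mapsTo (hmaps x) (Or.inl .rfl) with hy | hy
  · exact hy
  rcases hxy.symm.mem_of_mapsTo (hmaps y) (Or.inl .rfl) with hx | hx
  · exact hx.symm
  · exact hx.symm.trans hy

theorem sameCycle_mul_swap_iff_of_not_sameCycle (hu : ¬σ.SameCycle u x)
    (hv : ¬σ.SameCycle v x) : (σ * swap u v).SameCycle x y ↔ σ.SameCycle x y := by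
  have hne : ∀ z, σ.SameCycle x z → z ≠ u ∧ z ≠ v := fun z hz =>
    ⟨fun h => hu (h ▸ hz.symm), fun h => hv (h ▸ hz.symm)⟩
  have hmp : ∀ z, (σ * swap u v).SameCycle x z → σ.SameCycle x z := by
    intro z hz
    refine hz.mem_of_mapsTo (s := {w | σ.SameCycle x w}) (fun w hw => ?_) SameCycle.rfl
    rw [Set.mem_ofPred_eq, mul_swap_apply_of_ne_of_ne (hne w hw).1 (hne w hw).2]
    exact sameCycle_apply_right.2 hw
  refine ⟨hmp y, fun hxy =>
    hxy.mem_of_mapsTo (s := {w | (σ * swap u v).SameCycle x w}) (fun w hw => ?_) SameCycle.rfl⟩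
  have hw' := hne w (hmp w hw)
  rw [Set.mem_ofPred_eq, ← mul_swap_apply_of_ne_of_ne hw'.1 hw'.2]
  exact sameCycle_apply_right.2 hw

theorem not_sameCycle_mul_swap (huv : u ≠ v) (h : σ.SameCycle u v) :
    ¬(σ * swap u v).SameCycle u v := by
  obtain ⟨m, hm, -, hmu⟩ := h.symm.exists_pow_eq''
  have hP : ∃ r, 0 < r ∧ (σ ^ r) v = u := ⟨m, hm, hmu⟩
  obtain ⟨r, ⟨hr, hru⟩, hmin⟩ : ∃ r, (0 < r ∧ (σ ^ r) v = u) ∧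
      ∀ s < r, ¬(0 < s ∧ (σ ^ s) v = u) :=
    ⟨Nat.find hP, Nat.find_spec hP, fun s => Nat.find_min hP⟩
  have hne : ∀ s, 0 < s → s < r → (σ ^ s) v ≠ u ∧ (σ ^ s) v ≠ v := by
    refine fun s hs hsr => ⟨fun hsu => hmin s hsr ⟨hs, hsu⟩, fun hsv => ?_⟩
    refine hmin (r - s) (Nat.sub_lt hr hs) ⟨Nat.sub_pos_of_lt hsr, ?_⟩
    rw [← hsv, ← mul_apply, ← pow_add, Nat.sub_add_cancel hsr.le, hru]
  -- the arc `σ v, σ² v, …, σ^r v = u` of the `σ`-cycle is closed under `σ * swap u v`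
  have hmaps : Set.MapsTo (σ * swap u v) {x | ∃ s, 0 < s ∧ s ≤ r ∧ (σ ^ s) v = x}
      {x | ∃ s, 0 < s ∧ s ≤ r ∧ (σ ^ s) v = x} := by
    rintro _ ⟨s, hs, hsr, rfl⟩
    rcases hsr.lt_or_eq with hsr | rfl
    · refine ⟨s + 1, s.succ_pos, hsr, ?_⟩
      rw [mul_swap_apply_of_ne_of_ne (hne s hs hsr).1 (hne s hs hsr).2, pow_succ', mul_apply]
    · exact ⟨1, one_pos, hr, by rw [hru, mul_apply, swap_apply_left, pow_one]⟩
  intro hπ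
  obtain ⟨s, hs, hsr, hsv⟩ := hπ.mem_of_mapsTo hmaps ⟨r, hr, le_rfl, hru⟩
  rcases hsr.lt_or_eq with hsr | rfl
  · exact (hne s hs hsr).2 hsv
  · exact huv (hru.symm.trans hsv)

end MulSwap

end Equiv.Perm

section Count

variable {n : ℕ} {σ : Perm (Fin n)} {u v : Fin n}

def cycleMins (σ : Perm (Fin n)) : Set (Fin n) := {x | ∀ y, σ.SameCycle x y → x ≤ y}

theorem cycleCount_eq_ncard_cycleMins (σ : Perm (Fin n)) :
    cycleCount σ = (cycleMins σ).ncard := rfl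

theorem ncard_cycleMins_inter_sameCycle (σ : Perm (Fin n)) (x : Fin n) :
    (cycleMins σ ∩ {y | σ.SameCycle x y}).ncard = 1 := by
  obtain ⟨m, hxm, hm⟩ := Set.exists_min_image {y | σ.SameCycle x y} id (Set.toFinite _)
    ⟨x, .rfl⟩
  rw [Set.ncard_eq_one]
  refine ⟨m, Set.eq_singleton_iff_unique_mem.2 ⟨⟨fun y hy => hm y (hxm.trans hy), hxm⟩, ?_⟩⟩
  rintro y ⟨hy, hxy⟩
  exact le_antisymm (hy m (hxy.symm.trans hxm)) (hm y hxy)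

theorem cycleCount_le (σ : Perm (Fin n)) : cycleCount σ ≤ n :=
  (Set.ncard_le_card (cycleMins σ)).trans_eq (by simp)

theorem cycleCount_one : cycleCount (1 : Perm (Fin n)) = n := by
  have : cycleMins (1 : Perm (Fin n)) = Set.univ :=
    Set.eq_univ_of_forall fun x y hxy => (sameCycle_one.1 hxy).le
  rw [cycleCount_eq_ncard_cycleMins, this, Set.ncard_univ, Nat.card_eq_fintype_card,
    Fintype.card_fin]

theorem cycleCount_mul_swap_add_one (h : ¬σ.SameCycle u v) :
    cycleCount (σ * swap u v) + 1 = cycleCount σ := by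
  have hC : {y | (σ * swap u v).SameCycle u y} = {y | σ.SameCycle u y} ∪ {y | σ.SameCycle v y} := by
    ext y
    refine ⟨SameCycle.of_mul_swap, ?_⟩
    rintro (hy | hy)
    · exact sameCycle_mul_swap_of_sameCycle h hy
    · exact (sameCycle_mul_swap h).trans (sameCycle_mul_swap_of_sameCycle h hy)
  have hout : cycleMins (σ * swap u v) \ {y | (σ * swap u v).SameCycle u y} =
      cycleMins σ \ {y | (σ * swap u v).SameCycle u y} := by
    ext x
    simp only [Set.mem_sdiff, and_congr_left_iff, hC, Set.mem_union, Set.mem_ofPred_eq, not_or]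
    rintro ⟨hu, hv⟩
    exact forall_congr' fun y => imp_congr_left (sameCycle_mul_swap_iff_of_not_sameCycle hu hv)
  have hdisj : Disjoint (cycleMins σ ∩ {y | σ.SameCycle u y})
      (cycleMins σ ∩ {y | σ.SameCycle v y}) :=
    Set.disjoint_left.2 fun y hu hv => h (hu.2.trans hv.2.symm)
  rw [cycleCount_eq_ncard_cycleMins, cycleCount_eq_ncard_cycleMins,
    ← Set.ncard_inter_add_ncard_sdiff_eq_ncard (cycleMins (σ * swap u v))
      {y | (σ * swap u v).SameCycle u y},
    ← Set.ncard_inter_add_ncard_sdiff_eq_ncard (cycleMins σ) {y | (σ * swap u v).SameCycle u y},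
    hout, ncard_cycleMins_inter_sameCycle, hC, Set.inter_union_distrib_left,
    Set.ncard_union_eq hdisj, ncard_cycleMins_inter_sameCycle, ncard_cycleMins_inter_sameCycle]
  omega

theorem normPerm_one : normPerm (1 : Perm (Fin n)) = 0 := by
  rw [normPerm, cycleCount_one, Nat.sub_self]

theorem normPerm_mul_swap_of_not_sameCycle (h : ¬σ.SameCycle u v) :
    normPerm (σ * swap u v) = normPerm σ + 1 := by
  have := cycleCount_mul_swap_add_one h
  have := cycleCount_le σ
  unfold normPerm
  omega

theorem normPerm_mul_swap_of_sameCycle (huv : u ≠ v) (h : σ.SameCycle u v) :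
    normPerm (σ * swap u v) + 1 = normPerm σ := by
  simpa [mul_assoc] using (normPerm_mul_swap_of_not_sameCycle (not_sameCycle_mul_swap huv h)).symm

theorem normPerm_mul_swap_le (σ : Perm (Fin n)) (u v : Fin n) :
    normPerm (σ * swap u v) ≤ normPerm σ + 1 := by
  rcases eq_or_ne u v with rfl | huv
  · rw [swap_self, ← Perm.one_def, mul_one]
    exact Nat.le_succ _
  by_cases h : σ.SameCycle u v
  · have := normPerm_mul_swap_of_sameCycle huv h
    omega
  · exact (normPerm_mul_swap_of_not_sameCycle h).le

theorem normPerm_mul_prod_le {L : List (Perm (Fin n))} (hL : ∀ τ ∈ L, τ.IsSwap)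
    (ρ : Perm (Fin n)) : normPerm (ρ * L.prod) ≤ normPerm ρ + L.length := by
  induction L generalizing ρ with
  | nil => simp
  | cons τ L ih =>
    obtain ⟨u, v, -, rfl⟩ := hL τ List.mem_cons_self
    have := ih (fun τ hτ => hL τ (List.mem_cons_of_mem _ hτ)) (ρ * swap u v)
    have := normPerm_mul_swap_le ρ u v
    rw [List.prod_cons, ← mul_assoc, List.length_cons]
    omega

theorem normPerm_prod_le_length {L : List (Perm (Fin n))} (hL : ∀ τ ∈ L, τ.IsSwap) :
    normPerm L.prod ≤ L.length := by
  simpa [normPerm_one] using normPerm_mul_prod_le hL 1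

theorem exists_isSwap_prod_eq (ρ : Perm (Fin n)) :
    ∃ L : List (Perm (Fin n)), (∀ τ ∈ L, τ.IsSwap) ∧ L.length = normPerm ρ ∧ L.prod = ρ := by
  induction hρ : normPerm ρ using Nat.strong_induction_on generalizing ρ with
  | _ m ih =>
  rcases eq_or_ne ρ 1 with rfl | hρ1
  · exact ⟨[], by simp, by rw [← hρ, normPerm_one, List.length_nil], rfl⟩
  obtain ⟨x, hx⟩ : ∃ x, ρ x ≠ x := not_forall.1 fun h => hρ1 (Equiv.ext h)
  have hsplit := normPerm_mul_swap_of_sameCycle hx.symm (sameCycle_apply_right.2 .rfl)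
  obtain ⟨L, hL, hlen, hprod⟩ := ih _ (by omega) (ρ * swap x (ρ x)) rfl
  refine ⟨L ++ [swap x (ρ x)], List.forall_mem_append.2 ⟨hL, ?_⟩, by simp [hlen]; omega,
    by simp [hprod, mul_assoc]⟩
  simpa using ⟨x, ρ x, hx.symm, rfl⟩

theorem normPerm_mul_le (ρ ψ : Perm (Fin n)) : normPerm (ρ * ψ) ≤ normPerm ρ + normPerm ψ := by
  obtain ⟨L, hL, hlen, rfl⟩ := exists_isSwap_prod_eq ψ
  exact hlen ▸ normPerm_mul_prod_le hL ρ

theorem precLe.trans {σ₁ σ₂ σ₃ : Perm (Fin n)} (h₁₂ : precLe σ₁ σ₂) (h₂₃ : precLe σ₂ σ₃) :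
    precLe σ₁ σ₃ := by
  have h₁₃ := normPerm_mul_le σ₁ (σ₁⁻¹ * σ₃)
  have h₁₂₃ := normPerm_mul_le (σ₁⁻¹ * σ₂) (σ₂⁻¹ * σ₃)
  rw [mul_inv_cancel_left] at h₁₃
  rw [mul_assoc, mul_inv_cancel_left] at h₁₂₃
  unfold precLe at *
  omega

end Count

section CyclicOrder

variable {n : ℕ}

def fwdDist (a b : Fin n) : ℕ := if (a : ℕ) ≤ b then b - a else n + b - a

def CyclicallyOrdered (π : Perm (Fin n)) : Prop :=
  ∀ x y, π.SameCycle x y → y ≠ x → fwdDist x (π x) ≤ fwdDist x y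

theorem cyclicallyOrdered_finRotate : ∀ n, CyclicallyOrdered (finRotate n)
  | 0 => fun x => x.elim0
  | m + 1 => fun x y _ hyx => by
    have hx1 : ((x + 1 : Fin (m + 1)) : ℕ) = if (x : ℕ) = m then 0 else (x : ℕ) + 1 := by
      rw [Fin.val_add_one]
      split_ifs <;> simp_all [Fin.ext_iff]
    have := Fin.val_injective.ne hyx
    have := x.isLt
    have := y.isLt
    rw [finRotate_apply]
    unfold fwdDist
    rw [hx1]
    split_ifs <;> omega

theorem CyclicallyOrdered.fwdDist_apply_lt {π : Perm (Fin n)} (hπ : CyclicallyOrdered π)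
    {a w : Fin n} (h : π.SameCycle a w) (haw : a ≠ w) (hπa : π a ≠ w) :
    fwdDist (π a) w < fwdDist a w := by
  have hle := hπ a w h haw.symm
  have hfix : π a ≠ a := fun hfix => haw (h.eq_of_left hfix)
  have := Fin.val_injective.ne haw
  have := Fin.val_injective.ne hπa
  have := Fin.val_injective.ne hfix
  have := w.isLt
  have := (π a).isLt
  unfold fwdDist at *
  split_ifs at * <;> omega

theorem lt_of_fwdDist_le {a b y : Fin n} (hab : a < b) (hya : y ≠ a)
    (h : fwdDist b a ≤ fwdDist y a) : a < y := by
  have := Fin.val_injective.ne hya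
  have := b.isLt
  rw [Fin.lt_def] at hab ⊢
  unfold fwdDist at h
  split_ifs at h <;> omega

theorem le_of_fwdDist_le {a b x : Fin n} (hxb : x < b) (h : fwdDist a b ≤ fwdDist x b) :
    x ≤ a := by
  rw [Fin.lt_def] at hxb
  rw [Fin.le_def]
  unfold fwdDist at h
  split_ifs at h <;> omega

variable {σ : Perm (Fin n)} {u v : Fin n}

theorem fwdDist_le_of_cyclicallyOrdered_mul_swap (h : ¬σ.SameCycle u v)
    (hπ : CyclicallyOrdered (σ * swap u v)) {z : Fin n} (hz : σ.SameCycle u z) :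
    fwdDist u v ≤ fwdDist z v := by
  obtain ⟨z₀, hz₀, hmin⟩ := Set.exists_min_image {z | σ.SameCycle u z} (fwdDist · v)
    (Set.toFinite _) ⟨u, .rfl⟩
  rcases eq_or_ne z₀ u with rfl | hu
  · exact hmin z hz
  have hv : z₀ ≠ v := fun hv => h (hv ▸ hz₀)
  have hσz₀ : σ.SameCycle u (σ z₀) := sameCycle_apply_right.2 hz₀
  have hlt := hπ.fwdDist_apply_lt
    ((sameCycle_mul_swap_of_sameCycle h hz₀).symm.trans (sameCycle_mul_swap h)) hv
    (by rw [mul_swap_apply_of_ne_of_ne hu hv]; exact fun hσv => h (hσv ▸ hσz₀))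
  rw [mul_swap_apply_of_ne_of_ne hu hv] at hlt
  exact absurd (hmin _ hσz₀) hlt.not_ge

theorem fwdDist_apply_le_of_cyclicallyOrdered_mul_swap (h : ¬σ.SameCycle u v)
    (hπ : CyclicallyOrdered (σ * swap u v)) {y : Fin n} (hy : σ.SameCycle u y) (hyu : y ≠ u) :
    fwdDist u (σ u) ≤ fwdDist u y := by
  -- `u` is the point of its `σ`-cycle nearest before `v`, so `y` and `σ u` lie on the arc from
  -- `v` to `u`, where `σ u = (σ * swap u v) v` comes first
  have hσu : σ.SameCycle u (σ u) := sameCycle_apply_right.2 .rfl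
  have hfix : σ u ≠ u := fun hfix => hyu (hy.eq_of_left hfix).symm
  have hyv : y ≠ v := fun hyv => h (hyv ▸ hy)
  have hσuv : σ u ≠ v := fun hσuv => h (hσuv ▸ hσu)
  have hvy := hπ v y ((sameCycle_mul_swap h).symm.trans (sameCycle_mul_swap_of_sameCycle h hy)) hyv
  rw [mul_swap_apply_right] at hvy
  have hy' := fwdDist_le_of_cyclicallyOrdered_mul_swap h hπ hy
  have hσu' := fwdDist_le_of_cyclicallyOrdered_mul_swap h hπ hσu
  have := Fin.val_injective.ne hyu
  have := Fin.val_injective.ne hfix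
  have := Fin.val_injective.ne hyv
  have := Fin.val_injective.ne hσuv
  have := Fin.val_injective.ne (fun huv : u = v => h (huv ▸ .rfl))
  have := u.isLt
  have := v.isLt
  have := y.isLt
  have := (σ u).isLt
  unfold fwdDist at *
  split_ifs at * <;> omega

theorem CyclicallyOrdered.of_mul_swap (hπ : CyclicallyOrdered (σ * swap u v))
    (h : ¬σ.SameCycle u v) : CyclicallyOrdered σ := by
  intro x y hxy hyx
  rcases eq_or_ne x u with rfl | hxu
  · exact fwdDist_apply_le_of_cyclicallyOrdered_mul_swap h hπ hxy hyx
  rcases eq_or_ne x v with rfl | hxv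
  · rw [swap_comm] at hπ
    exact fwdDist_apply_le_of_cyclicallyOrdered_mul_swap (fun h' => h h'.symm) hπ hxy hyx
  · have := hπ x y (sameCycle_mul_swap_of_sameCycle h hxy) hyx
    rwa [mul_swap_apply_of_ne_of_ne hxu hxv] at this

theorem CyclicallyOrdered.of_mul_prod_eq {c ρ : Perm (Fin n)} (hc : CyclicallyOrdered c)
    {L : List (Perm (Fin n))} (hL : ∀ τ ∈ L, τ.IsSwap) (hρ : ρ * L.prod = c)
    (hlen : normPerm ρ + L.length ≤ normPerm c) : CyclicallyOrdered ρ := by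
  induction L generalizing ρ with
  | nil =>
    rw [List.prod_nil, mul_one] at hρ
    exact hρ ▸ hc
  | cons τ L ih =>
    obtain ⟨u, v, huv, rfl⟩ := hL τ List.mem_cons_self
    have hL' : ∀ τ ∈ L, τ.IsSwap := fun τ hτ => hL τ (List.mem_cons_of_mem _ hτ)
    rw [List.prod_cons, ← mul_assoc] at hρ
    rw [List.length_cons] at hlen
    have hc := normPerm_mul_prod_le hL' (ρ * swap u v)
    rw [hρ] at hc
    have hmerge : ¬ρ.SameCycle u v := fun hsplit => by
      have := normPerm_mul_swap_of_sameCycle huv hsplit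
      omega
    refine (ih hL' hρ ?_).of_mul_swap hmerge
    have := normPerm_mul_swap_le ρ u v
    omega

theorem CyclicallyOrdered.of_precLe {c ρ : Perm (Fin n)} (hc : CyclicallyOrdered c)
    (h : precLe ρ c) : CyclicallyOrdered ρ := by
  obtain ⟨L, hL, hlen, hprod⟩ := exists_isSwap_prod_eq (ρ⁻¹ * c)
  exact hc.of_mul_prod_eq hL (by rw [hprod, mul_inv_cancel_left]) (by rw [hlen, h])

end CyclicOrder

section Chains

variable {n k : ℕ} {τ : Fin k → Perm (Fin n)}

theorem gammaP_succ {m : ℕ} (hm : m < k) : gammaP τ (m + 1) = gammaP τ m * τ ⟨m, hm⟩ := by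
  rw [gammaP, List.prod_take_succ _ m (by rwa [List.length_ofFn]), List.getElem_ofFn]
  rfl

theorem gammaP_mul_prod_drop (m : ℕ) :
    gammaP τ m * ((List.ofFn τ).drop m).prod = (List.ofFn τ).prod := by
  rw [gammaP, ← List.prod_append, List.take_append_drop]

theorem normPerm_gammaP_le (hτ : ∀ l, (τ l).IsSwap) (m : ℕ) : normPerm (gammaP τ m) ≤ m :=
  (normPerm_prod_le_length fun _ hψ => List.forall_mem_ofFn_iff.2 hτ _
    (List.mem_of_mem_take hψ)).trans (by simp)

theorem normPerm_prod_drop_le (hτ : ∀ l, (τ l).IsSwap) (m : ℕ) :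
    normPerm ((List.ofFn τ).drop m).prod ≤ k - m :=
  (normPerm_prod_le_length fun _ hψ => List.forall_mem_ofFn_iff.2 hτ _
    (List.mem_of_mem_drop hψ)).trans (by simp)

theorem normPerm_gammaP (hτ : ∀ l, (τ l).IsSwap) (hk : normPerm (List.ofFn τ).prod = k)
    {m : ℕ} (hm : m ≤ k) : normPerm (gammaP τ m) = m := by
  have := normPerm_mul_le (gammaP τ m) ((List.ofFn τ).drop m).prod
  rw [gammaP_mul_prod_drop, hk] at this
  have := normPerm_gammaP_le hτ m
  have := normPerm_prod_drop_le hτ m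
  omega

theorem precLe_gammaP (hτ : ∀ l, (τ l).IsSwap) (hk : normPerm (List.ofFn τ).prod = k)
    {m : ℕ} (hm : m ≤ k) : precLe (gammaP τ m) (List.ofFn τ).prod := by
  have := normPerm_mul_le (gammaP τ m) ((List.ofFn τ).drop m).prod
  rw [gammaP_mul_prod_drop, hk, normPerm_gammaP hτ hk hm] at this
  have := normPerm_prod_drop_le hτ m
  rw [precLe, ← gammaP_mul_prod_drop m, inv_mul_cancel_left, gammaP_mul_prod_drop, hk,
    normPerm_gammaP hτ hk hm]
  omega

end Chains

/-- If γ = ((i₁ j₁),…,(i_k j_k)) ∈ Σ_n(k) and l ∈ {1,…,k}, then every element of the cycle of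
γ_{l−1} containing j_l is > i_l, and i_l is the largest element of its own cycle in γ_{l−1}
with this property. -/
theorem stmt3 (n k : ℕ) (i j : Fin k → Fin n) (hij : ∀ l, i l < j l)
    (hγ : (fun l => Equiv.swap (i l) (j l)) ∈ SigmaSet n k) (l : Fin k) :
    (∀ y, (gammaP (fun m => Equiv.swap (i m) (j m)) (l : ℕ)).SameCycle (j l) y → i l < y) ∧
    (∀ x, (gammaP (fun m => Equiv.swap (i m) (j m)) (l : ℕ)).SameCycle (i l) x →
      (∀ y, (gammaP (fun m => Equiv.swap (i m) (j m)) (l : ℕ)).SameCycle (j l) y → x < y) →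
      x ≤ i l) := by
  obtain ⟨hswap, hnorm, hprec⟩ := hγ
  set σ := gammaP (fun m => swap (i m) (j m)) l
  have hsucc : gammaP (fun m => swap (i m) (j m)) (l + 1) = σ * swap (i l) (j l) :=
    gammaP_succ l.isLt
  have hσ : normPerm σ = l := normPerm_gammaP hswap hnorm l.isLt.le
  have hπ : normPerm (σ * swap (i l) (j l)) = l + 1 := hsucc ▸ normPerm_gammaP hswap hnorm l.isLt
  have hmerge : ¬σ.SameCycle (i l) (j l) := fun hsplit => by
    have := normPerm_mul_swap_of_sameCycle (hij l).ne hsplit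
    omega
  have hord : CyclicallyOrdered (σ * swap (i l) (j l)) :=
    hsucc ▸ (cyclicallyOrdered_finRotate n).of_precLe
      ((precLe_gammaP hswap hnorm l.isLt).trans hprec)
  refine ⟨fun y hy => lt_of_fwdDist_le (hij l) (fun hyi => hmerge (hyi ▸ hy).symm) ?_,
    fun x hx hlt => le_of_fwdDist_le (hlt (j l) .rfl) ?_⟩
  · exact fwdDist_le_of_cyclicallyOrdered_mul_swap (fun h => hmerge h.symm)
      (swap_comm (i l) (j l) ▸ hord) hy
  · exact fwdDist_le_of_cyclicallyOrdered_mul_swap hmerge hord hx
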